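/- Suppose there exists g with |g|_p = ψ(p) for all p ∈ (a,b) (a representation of ψ). Then the operator norm of the dilation σ_s on G(ψ; a, b) equals max(s^{1/a}, s^{1/b}) for every s > 0. -/

import Mathlib

/-!
Since `(0,∞)` is invariant under `x ↦ x / s` and this map scales Lebesgue measure by `s`,
`|f(·/s)|_p = s^{1/p} |f|_p`, so `‖σ_s‖ ≤ sup_{p ∈ (a,b)} s^{1/p} = max(s^{1/a}, s^{1/b})`.
For the representing function `g` the ratio `|g(·/s)|_p / ψ(p)` is exactly `s^{1/p}`,
while `‖g‖ = 1`, so `g` attains the bound.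
-/

open MeasureTheory Set ENNReal

/-- Grand Lebesgue functional on `(0,∞)` with Lebesgue measure. -/
noncomputable def GNorm (ψ : ℝ → ℝ) (a b : ℝ) (h : ℝ → ℝ) : ℝ≥0∞ :=
  ⨆ p ∈ Set.Ioo a b,
    eLpNorm h (ENNReal.ofReal p) (volume.restrict (Set.Ioi (0:ℝ))) / ENNReal.ofReal (ψ p)

theorem measurableEmbedding_divRight₀ {s : ℝ} (hs : s ≠ 0) : MeasurableEmbedding (· / s) := by
  simpa only [div_eq_mul_inv] using measurableEmbedding_mulRight₀ (inv_ne_zero hs)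

theorem map_div_volume_restrict_Ioi {s : ℝ} (hs : 0 < s) :
    (volume.restrict (Ioi (0 : ℝ))).map (· / s) = ENNReal.ofReal s • volume.restrict (Ioi 0) := by
  have hpre : (· / s) ⁻¹' Ioi (0 : ℝ) = Ioi 0 := by
    ext x
    simp [div_pos_iff_of_pos_right hs]
  have hvol : volume.map (· / s) = ENNReal.ofReal s • (volume : Measure ℝ) := by
    simpa only [div_eq_mul_inv, inv_inv, abs_of_pos hs] using
      Real.map_volume_mul_right (inv_ne_zero hs.ne')
  have := (measurableEmbedding_divRight₀ hs.ne').restrict_map volume (Ioi 0)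
  rwa [hpre, hvol, Measure.restrict_smul, eq_comm] at this

theorem eLpNorm_comp_div_restrict_Ioi {ε : Type*} [TopologicalSpace ε] [ContinuousENorm ε]
    (f : ℝ → ε) {s : ℝ} (hs : 0 < s) (p : ℝ≥0∞) :
    eLpNorm (fun x => f (x / s)) p (volume.restrict (Ioi 0))
      = ENNReal.ofReal s ^ (1 / p).toReal * eLpNorm f p (volume.restrict (Ioi 0)) := by
  rw [← smul_eq_mul, ← eLpNorm_smul_measure_of_ne_zero (ENNReal.ofReal_pos.2 hs).ne',
    ← map_div_volume_restrict_Ioi hs, (measurableEmbedding_divRight₀ hs.ne').eLpNorm_map_measure]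
  rfl

theorem eLpNorm_ofReal_comp_div_restrict_Ioi {ε : Type*} [TopologicalSpace ε] [ContinuousENorm ε]
    (f : ℝ → ε) {s p : ℝ} (hs : 0 < s) (hp : 0 < p) :
    eLpNorm (fun x => f (x / s)) (ENNReal.ofReal p) (volume.restrict (Ioi 0))
      = ENNReal.ofReal (s ^ (1 / p))
        * eLpNorm f (ENNReal.ofReal p) (volume.restrict (Ioi 0)) := by
  rw [eLpNorm_comp_div_restrict_Ioi f hs, one_div, ENNReal.toReal_inv, ENNReal.toReal_ofReal hp.le,
    ENNReal.ofReal_rpow_of_pos hs, one_div]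

theorem ContinuousWithinAt.le_biSup_of_mem_closure {α β : Type*} [TopologicalSpace α]
    [CompleteLinearOrder β] [TopologicalSpace β] [OrderTopology β] {f : α → β} {S : Set α}
    {x : α} (hx : x ∈ closure S) (hf : ContinuousWithinAt f S x) : f x ≤ ⨆ y ∈ S, f y :=
  hf.closure_le hx continuousWithinAt_const fun _ hy => le_iSup₂ (f := fun y _ => f y) _ hy

theorem Real.rpow_one_div_le_max {s a b p : ℝ} (hs : 0 < s) (ha : 0 < a) (hp : p ∈ Icc a b) :
    s ^ (1 / p) ≤ max (s ^ (1 / a)) (s ^ (1 / b)) := by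
  rcases le_or_gt 1 s with h1 | h1
  · exact le_max_of_le_left (Real.rpow_le_rpow_of_exponent_le h1
      (one_div_le_one_div_of_le ha hp.1))
  · exact le_max_of_le_right (Real.rpow_le_rpow_of_exponent_ge hs h1.le
      (one_div_le_one_div_of_le (ha.trans_le hp.1) hp.2))

theorem iSup_Ioo_ofReal_rpow_one_div {s a b : ℝ} (hs : 0 < s) (ha : 0 < a) (hab : a < b) :
    ⨆ p ∈ Ioo a b, ENNReal.ofReal (s ^ (1 / p))
      = ENNReal.ofReal (max (s ^ (1 / a)) (s ^ (1 / b))) := by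
  refine le_antisymm (iSup₂_le fun p hp =>
    ENNReal.ofReal_le_ofReal (Real.rpow_one_div_le_max hs ha (Ioo_subset_Icc_self hp))) ?_
  have hendpoint : ∀ c ∈ Icc a b, ENNReal.ofReal (s ^ (1 / c)) ≤ ⨆ p ∈ Ioo a b,
      ENNReal.ofReal (s ^ (1 / p)) := by
    intro c hc
    have hc0 : c ≠ 0 := (ha.trans_le hc.1).ne'
    refine ContinuousWithinAt.le_biSup_of_mem_closure
      (f := fun p : ℝ => ENNReal.ofReal (s ^ (1 / p))) (by rwa [closure_Ioo hab.ne]) ?_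
    exact (ENNReal.continuous_ofReal.continuousAt.comp <|
      (Real.continuousAt_const_rpow hs.ne').comp
        (continuousAt_const.div continuousAt_id hc0)).continuousWithinAt
  rcases max_choice (s ^ (1 / a)) (s ^ (1 / b)) with h | h <;> rw [h]
  · exact hendpoint a ⟨le_rfl, hab.le⟩
  · exact hendpoint b ⟨hab.le, le_rfl⟩

section GNorm

variable {ψ : ℝ → ℝ} {a b : ℝ}

theorem eLpNorm_div_le_GNorm (h : ℝ → ℝ) {p : ℝ} (hp : p ∈ Ioo a b) :
    eLpNorm h (ENNReal.ofReal p) (volume.restrict (Ioi 0)) / ENNReal.ofReal (ψ p)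
      ≤ GNorm ψ a b h :=
  le_iSup₂ (f := fun q (_ : q ∈ Ioo a b) =>
    eLpNorm h (ENNReal.ofReal q) (volume.restrict (Ioi 0)) / ENNReal.ofReal (ψ q)) p hp

theorem GNorm_comp_div_le (ha : 0 < a) (f : ℝ → ℝ) {s : ℝ} (hs : 0 < s) :
    GNorm ψ a b (fun x => f (x / s))
      ≤ (⨆ p ∈ Ioo a b, ENNReal.ofReal (s ^ (1 / p))) * GNorm ψ a b f := by
  refine iSup₂_le fun p hp => ?_
  rw [eLpNorm_ofReal_comp_div_restrict_Ioi f hs (ha.trans hp.1), mul_div_assoc]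
  exact mul_le_mul' (le_iSup₂ (f := fun q (_ : q ∈ Ioo a b) => ENNReal.ofReal (s ^ (1 / q))) p hp)
    (eLpNorm_div_le_GNorm f hp)

variable {g : ℝ → ℝ}
  (hrep : ∀ p ∈ Ioo a b,
    eLpNorm g (ENNReal.ofReal p) (volume.restrict (Ioi 0)) = ENNReal.ofReal (ψ p))
include hrep

theorem GNorm_le_one_of_eLpNorm_eq : GNorm ψ a b g ≤ 1 :=
  iSup₂_le fun p hp => by
    rw [hrep p hp]
    exact ENNReal.div_self_le_one

theorem GNorm_comp_div_of_eLpNorm_eq (ha : 0 < a) (hψpos : ∀ p ∈ Ioo a b, 0 < ψ p)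
    {s : ℝ} (hs : 0 < s) :
    GNorm ψ a b (fun x => g (x / s)) = ⨆ p ∈ Ioo a b, ENNReal.ofReal (s ^ (1 / p)) :=
  iSup_congr fun p => iSup_congr fun hp => by
    rw [eLpNorm_ofReal_comp_div_restrict_Ioi g hs (ha.trans hp.1), hrep p hp, mul_div_assoc,
      ENNReal.div_self (ENNReal.ofReal_pos.2 (hψpos p hp)).ne' ENNReal.ofReal_ne_top, mul_one]

end GNorm

theorem dilation_operator_norm_general
    (a b : ℝ) (ha : 1 ≤ a) (hab : a < b)
    (ψ : ℝ → ℝ)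
    (hψpos : ∀ p ∈ Set.Ioo a b, 0 < ψ p)
    (g : ℝ → ℝ)
    (hrep : ∀ p ∈ Set.Ioo a b,
      eLpNorm g (ENNReal.ofReal p) (volume.restrict (Set.Ioi (0:ℝ)))
        = ENNReal.ofReal (ψ p))
    (s : ℝ) (hs : 0 < s) :
    (⨆ (f : ℝ → ℝ) (_ : GNorm ψ a b f ≤ 1), GNorm ψ a b (fun x => f (x / s)))
      = ENNReal.ofReal (max (s ^ (1 / a)) (s ^ (1 / b))) := by
  have ha0 : 0 < a := one_pos.trans_le ha
  rw [← iSup_Ioo_ofReal_rpow_one_div hs ha0 hab]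
  refine le_antisymm (iSup₂_le fun f hf => ?_) ?_
  · calc GNorm ψ a b (fun x => f (x / s))
        ≤ (⨆ p ∈ Ioo a b, ENNReal.ofReal (s ^ (1 / p))) * GNorm ψ a b f :=
          GNorm_comp_div_le ha0 f hs
      _ ≤ ⨆ p ∈ Ioo a b, ENNReal.ofReal (s ^ (1 / p)) := mul_le_of_le_one_right' hf
  · rw [← GNorm_comp_div_of_eLpNorm_eq hrep ha0 hψpos hs]
    exact le_iSup₂ (f := fun f (_ : GNorm ψ a b f ≤ 1) => GNorm ψ a b fun x => f (x / s)) g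
      (GNorm_le_one_of_eLpNorm_eq hrep)

/-- If `ψ` admits a representation `|g|_p = ψ(p)`, then the operator norm of the
dilation `σ_s f = f(·/s)` on `G(ψ; a, b)` is exactly `max(s^{1/a}, s^{1/b})`. -/
theorem dilation_operator_norm
    (a b : ℝ) (ha : 1 ≤ a) (hab : a < b)
    (ψ : ℝ → ℝ) (hψc : ContinuousOn ψ (Set.Ioo a b))
    (hψpos : ∀ p ∈ Set.Ioo a b, 0 < ψ p)
    (g : ℝ → ℝ) (hg : Measurable g)
    (hrep : ∀ p ∈ Set.Ioo a b,
      eLpNorm g (ENNReal.ofReal p) (volume.restrict (Set.Ioi (0:ℝ)))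
        = ENNReal.ofReal (ψ p))
    (s : ℝ) (hs : 0 < s) :
    (⨆ (f : ℝ → ℝ) (_ : GNorm ψ a b f ≤ 1), GNorm ψ a b (fun x => f (x / s)))
      = ENNReal.ofReal (max (s ^ (1 / a)) (s ^ (1 / b))) :=
  dilation_operator_norm_general a b ha hab ψ hψpos g hrep s hs
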